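/- arXiv:2406.16509 — 3 statements merged into one kernel-verified Lean document; each statement's English description precedes it below -/
import Mathlib

section
/- Embedding with asymptotically sharp constant: Let Ω have finite Lebesgue measure, φ ∈ Φ_w(Ω), c, L ≥ 1, p ≥ 1. Assume 1/c ≤ φ(x,1) ≤ c for a.e. x ∈ Ω and φ satisfies (aInc)_p with constant L. Then for every measurable f, ‖f‖_{L^p(Ω)} ≤ (2L(|Ω|+c))^{1/p} ‖f‖_φ; in particular L^φ(Ω) embeds continuously into L^p(Ω). -/
open MeasureTheory Set Filter Topology ENNReal

/-- The modular `ρ_φ(f) = ∫_Ω φ(x,|f(x)|) dx` of a generalized Orlicz space. -/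
noncomputable def gModular {N : ℕ} (Ω : Set (Fin N → ℝ))
    (φ : (Fin N → ℝ) → ℝ → ℝ≥0∞) (f : (Fin N → ℝ) → ℝ) : ℝ≥0∞ :=
  ∫⁻ x in Ω, φ x |f x|

/-- The Luxemburg quasinorm `‖f‖_φ = inf{λ > 0 : ρ_φ(f/λ) ≤ 1}` (with value `∞` if no
such `λ` exists). -/
noncomputable def luxNorm {N : ℕ} (Ω : Set (Fin N → ℝ))
    (φ : (Fin N → ℝ) → ℝ → ℝ≥0∞) (f : (Fin N → ℝ) → ℝ) : ℝ≥0∞ :=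
  sInf (ENNReal.ofReal '' {l : ℝ | 0 < l ∧ gModular Ω φ (fun x => f x / l) ≤ 1})

/-- `φ` is a generalized weak Φ-function on `Ω`: measurability of `x ↦ φ(x,|f(x)|)`,
`φ(x,0) = 0`, `lim_{t→0⁺} φ(x,t) = 0`, `lim_{t→∞} φ(x,t) = ∞`, `t ↦ φ(x,t)` increasing,
and `(aInc)₁` with some constant `L ≥ 1`. -/
def IsWeakPhi {N : ℕ} (Ω : Set (Fin N → ℝ)) (φ : (Fin N → ℝ) → ℝ → ℝ≥0∞) : Prop :=
  (∀ f : (Fin N → ℝ) → ℝ, Measurable f → Measurable fun x => φ x |f x|) ∧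
  (∀ᵐ x ∂(volume.restrict Ω),
      φ x 0 = 0 ∧ Tendsto (φ x) (nhdsWithin 0 (Ioi 0)) (nhds 0) ∧
      Tendsto (φ x) atTop (nhds ⊤) ∧ MonotoneOn (φ x) (Ici 0)) ∧
  (∃ L : ℝ, 1 ≤ L ∧ ∀ᵐ x ∂(volume.restrict Ω), ∀ t, 0 ≤ t → ∀ l, 0 ≤ l → l ≤ 1 →
      φ x (l * t) ≤ ENNReal.ofReal (L * l) * φ x t)

/-!
Normalise `f` by any admissible `λ` of the Luxemburg norm, so that `ρ_φ(f/λ) ≤ 1`. Pointwise,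
`|f/λ|^p ≤ 1` where `|f/λ| ≤ 1`, and where `t = |f/λ| > 1`, `(aInc)_p` applied with the factor
`1/t` together with `φ(x,1) ≥ 1/c` gives `t^p ≤ L c φ(x,t)`. Integrating over `Ω`,
`‖f/λ‖_p^p ≤ |Ω| + L c ≤ 2L(|Ω| + c)`, and taking the infimum over `λ` gives the claim.
-/

/-- Condition `(aInc)_p` with constant `L`: `t ↦ ψ t / t ^ p` is `L`-almost increasing. -/
def AInc (ψ : ℝ → ℝ≥0∞) (L p : ℝ) : Prop :=
  ∀ t, 0 ≤ t → ∀ l, 0 ≤ l → l ≤ 1 → ψ (l * t) ≤ ENNReal.ofReal (L * l ^ p) * ψ t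

namespace AInc

variable {ψ : ℝ → ℝ≥0∞} {c L p t : ℝ}

theorem ofReal_rpow_le_mul (hψ : AInc ψ L p) (hc : 0 < c)
    (hψ₁ : ENNReal.ofReal (1 / c) ≤ ψ 1) (ht : 1 ≤ t) :
    ENNReal.ofReal (t ^ p) ≤ ENNReal.ofReal (L * c) * ψ t := by
  have ht₀ : 0 < t := one_pos.trans_le ht
  have hscale : ψ 1 ≤ ENNReal.ofReal (L * (1 / t) ^ p) * ψ t := by
    have := hψ t ht₀.le (1 / t) (by positivity) ((div_le_one ht₀).2 ht)
    rwa [one_div_mul_cancel ht₀.ne'] at this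
  have hct : 0 ≤ c * t ^ p := by positivity
  calc ENNReal.ofReal (t ^ p) = ENNReal.ofReal (c * t ^ p) * ENNReal.ofReal (1 / c) := by
        rw [← ENNReal.ofReal_mul hct]; congr 1; field_simp
    _ ≤ ENNReal.ofReal (c * t ^ p) * (ENNReal.ofReal (L * (1 / t) ^ p) * ψ t) := by
        gcongr; exact hψ₁.trans hscale
    _ = ENNReal.ofReal (L * c) * ψ t := by
        rw [← mul_assoc, ← ENNReal.ofReal_mul hct]
        congr 2
        rw [one_div, Real.inv_rpow ht₀.le]
        field_simp

theorem ofReal_rpow_le_one_add (hψ : AInc ψ L p) (hc : 0 < c)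
    (hψ₁ : ENNReal.ofReal (1 / c) ≤ ψ 1) (hp : 0 ≤ p) (ht : 0 ≤ t) :
    ENNReal.ofReal t ^ p ≤ 1 + ENNReal.ofReal (L * c) * ψ t := by
  rcases le_or_gt t 1 with ht₁ | ht₁
  · exact (ENNReal.rpow_le_one (ENNReal.ofReal_le_one.2 ht₁) hp).trans le_self_add
  · rw [ENNReal.ofReal_rpow_of_nonneg ht hp]
    exact (hψ.ofReal_rpow_le_mul hc hψ₁ ht₁.le).trans le_add_self

end AInc

section Embedding

variable {N : ℕ} {Ω : Set (Fin N → ℝ)} {φ : (Fin N → ℝ) → ℝ → ℝ≥0∞} {c L p : ℝ}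

theorem lintegral_enorm_rpow_le_volume_add_gModular (hc : 0 < c) (hp : 0 ≤ p)
    (hφ₁ : ∀ᵐ x ∂(volume.restrict Ω), ENNReal.ofReal (1 / c) ≤ φ x 1)
    (haInc : ∀ᵐ x ∂(volume.restrict Ω), AInc (φ x) L p) (g : (Fin N → ℝ) → ℝ) :
    ∫⁻ x in Ω, ‖g x‖ₑ ^ p ≤ volume Ω + ENNReal.ofReal (L * c) * gModular Ω φ g := by
  calc ∫⁻ x in Ω, ‖g x‖ₑ ^ p ≤ ∫⁻ x in Ω, (1 + ENNReal.ofReal (L * c) * φ x |g x|) := by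
        refine lintegral_mono_ae ?_
        filter_upwards [hφ₁, haInc] with x hx₁ hx
        rw [Real.enorm_eq_ofReal_abs]
        exact hx.ofReal_rpow_le_one_add hc hx₁ hp (abs_nonneg _)
    _ = volume Ω + ENNReal.ofReal (L * c) * gModular Ω φ g := by
        rw [lintegral_add_left measurable_const, lintegral_const_mul' _ _ ofReal_ne_top]
        simp [gModular]

theorem eLpNorm_le_of_gModular_le_one (hc : 0 < c) (hp : 0 < p)
    (hφ₁ : ∀ᵐ x ∂(volume.restrict Ω), ENNReal.ofReal (1 / c) ≤ φ x 1)
    (haInc : ∀ᵐ x ∂(volume.restrict Ω), AInc (φ x) L p) {g : (Fin N → ℝ) → ℝ}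
    (hg : gModular Ω φ g ≤ 1) :
    eLpNorm g (ENNReal.ofReal p) (volume.restrict Ω)
      ≤ (volume Ω + ENNReal.ofReal (L * c)) ^ (1 / p) := by
  rw [eLpNorm_eq_lintegral_rpow_enorm_toReal (by simpa using hp) ofReal_ne_top,
    ENNReal.toReal_ofReal hp.le]
  gcongr
  calc ∫⁻ x in Ω, ‖g x‖ₑ ^ p ≤ volume Ω + ENNReal.ofReal (L * c) * gModular Ω φ g :=
        lintegral_enorm_rpow_le_volume_add_gModular hc hp.le hφ₁ haInc g
    _ ≤ volume Ω + ENNReal.ofReal (L * c) := by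
        gcongr; exact mul_le_of_le_one_right' hg

theorem eLpNorm_le_mul_luxNorm {q : ℝ≥0∞} {μ : Measure (Fin N → ℝ)} {K : ℝ≥0∞}
    (hK₀ : K ≠ 0) (hK : K ≠ ⊤) (hball : ∀ g, gModular Ω φ g ≤ 1 → eLpNorm g q μ ≤ K)
    (f : (Fin N → ℝ) → ℝ) :
    eLpNorm f q μ ≤ K * luxNorm Ω φ f := by
  rw [← ENNReal.div_le_iff' hK₀ hK]
  refine le_sInf ?_
  rintro _ ⟨l, ⟨hl, hmod⟩, rfl⟩
  rw [ENNReal.div_le_iff hK₀ hK]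
  calc eLpNorm f q μ = eLpNorm (l • fun x => f x / l) q μ := by
        congr 1; ext x; simp [mul_div_cancel₀ _ hl.ne']
    _ = ENNReal.ofReal l * eLpNorm (fun x => f x / l) q μ := by
        rw [eLpNorm_const_smul, Real.enorm_of_nonneg hl.le]
    _ ≤ ENNReal.ofReal l * K := by gcongr; exact hball _ hmod

end Embedding

theorem orlicz_embedding_Lp_general {N : ℕ} (Ω : Set (Fin N → ℝ)) (hΩ : volume Ω < ⊤)
    (φ : (Fin N → ℝ) → ℝ → ℝ≥0∞) (c L p : ℝ)
    (hc : 1 ≤ c) (hL : 1 ≤ L) (hp : 1 ≤ p)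
    (hanch : ∀ᵐ x ∂(volume.restrict Ω),
      ENNReal.ofReal (1 / c) ≤ φ x 1 ∧ φ x 1 ≤ ENNReal.ofReal c)
    (haInc : ∀ᵐ x ∂(volume.restrict Ω), ∀ t, 0 ≤ t → ∀ l, 0 ≤ l → l ≤ 1 →
      φ x (l * t) ≤ ENNReal.ofReal (L * l ^ p) * φ x t) :
    ∀ f : (Fin N → ℝ) → ℝ, Measurable f →
      eLpNorm f (ENNReal.ofReal p) (volume.restrict Ω)
        ≤ ENNReal.ofReal ((2 * L * ((volume Ω).toReal + c)) ^ (1 / p))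
            * luxNorm Ω φ f := by
  intro f _
  have hc₀ : 0 < c := one_pos.trans_le hc
  have hp₀ : 0 < p := one_pos.trans_le hp
  have hΩ₀ : 0 ≤ (volume Ω).toReal := ENNReal.toReal_nonneg
  have hconst : volume Ω + ENNReal.ofReal (L * c)
      ≤ ENNReal.ofReal (2 * L * ((volume Ω).toReal + c)) := by
    calc volume Ω + ENNReal.ofReal (L * c) = ENNReal.ofReal ((volume Ω).toReal + L * c) := by
          rw [ENNReal.ofReal_add hΩ₀ (by positivity), ENNReal.ofReal_toReal hΩ.ne]
      _ ≤ ENNReal.ofReal (2 * L * ((volume Ω).toReal + c)) :=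
          ENNReal.ofReal_le_ofReal (by nlinarith)
  refine eLpNorm_le_mul_luxNorm (ENNReal.ofReal_pos.2 (by positivity)).ne' ofReal_ne_top
    (fun g hg => ?_) f
  calc eLpNorm g (ENNReal.ofReal p) (volume.restrict Ω)
      ≤ (volume Ω + ENNReal.ofReal (L * c)) ^ (1 / p) :=
        eLpNorm_le_of_gModular_le_one hc₀ hp₀ (hanch.mono fun _ h => h.1) haInc hg
    _ ≤ ENNReal.ofReal (2 * L * ((volume Ω).toReal + c)) ^ (1 / p) := by gcongr
    _ = ENNReal.ofReal ((2 * L * ((volume Ω).toReal + c)) ^ (1 / p)) :=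
        ENNReal.ofReal_rpow_of_nonneg (by positivity) (by positivity)

/-- **Embedding with asymptotically sharp constant.** If `|Ω| < ∞`,
`φ ∈ Φ_w(Ω)`, `1/c ≤ φ(x,1) ≤ c` a.e., and `φ` satisfies `(aInc)_p` with constant `L`
(`c, L ≥ 1`, `p ≥ 1`), then `‖f‖_{L^p(Ω)} ≤ (2L(|Ω|+c))^{1/p} ‖f‖_φ` for every
measurable `f`; in particular `L^φ(Ω) ↪ L^p(Ω)`. -/
theorem orlicz_embedding_Lp {N : ℕ} (Ω : Set (Fin N → ℝ)) (hΩ : volume Ω < ⊤)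
    (φ : (Fin N → ℝ) → ℝ → ℝ≥0∞) (hφ : IsWeakPhi Ω φ) (c L p : ℝ)
    (hc : 1 ≤ c) (hL : 1 ≤ L) (hp : 1 ≤ p)
    (hanch : ∀ᵐ x ∂(volume.restrict Ω),
      ENNReal.ofReal (1 / c) ≤ φ x 1 ∧ φ x 1 ≤ ENNReal.ofReal c)
    (haInc : ∀ᵐ x ∂(volume.restrict Ω), ∀ t, 0 ≤ t → ∀ l, 0 ≤ l → l ≤ 1 →
      φ x (l * t) ≤ ENNReal.ofReal (L * l ^ p) * φ x t) :
    ∀ f : (Fin N → ℝ) → ℝ, Measurable f →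
      eLpNorm f (ENNReal.ofReal p) (volume.restrict Ω)
        ≤ ENNReal.ofReal ((2 * L * ((volume Ω).toReal + c)) ^ (1 / p))
            * luxNorm Ω φ f :=
  orlicz_embedding_Lp_general Ω hΩ φ c L p hc hL hp hanch haInc
end

section
/- Monotonicity of power envelopes: Let f: ℝ^{Nd} → [0,∞) be Borel and for n ≥ 1 let Qf^n denote the quasiconvex envelope of f^n (the supremum of all quasiconvex functions h ≤ f^n). Then the sequence n ↦ (Qf^n)^{1/n}(ξ) is nondecreasing in n for every ξ, so Q_∞f(ξ) := sup_{n≥1} (Qf^n)^{1/n}(ξ) is well defined and Q_∞ f ≤ f. -/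
open MeasureTheory Set Filter

/-- The open unit cube `(0,1)^N`. -/
def unitCube (N : ℕ) : Set (Fin N → ℝ) := univ.pi fun _ => Ioo (0 : ℝ) 1

/-- Morrey quasiconvexity of `g : ℝ^{Nd} → ℝ` (identifying `ℝ^{Nd}` with the space of
linear maps `ℝ^N → ℝ^d`): `g(ξ) ≤ ∫_{(0,1)^N} g(ξ + Du(x)) dx` for every `ξ` and every
Lipschitz test function `u ∈ W^{1,∞}_0((0,1)^N; ℝ^d)`. -/
def MorreyQuasiconvex {N d : ℕ} (g : ((Fin N → ℝ) →L[ℝ] (Fin d → ℝ)) → ℝ) : Prop :=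
  ∀ ξ, ∀ u : (Fin N → ℝ) → (Fin d → ℝ),
    (∃ K, LipschitzWith K u) → (∀ x ∉ unitCube N, u x = 0) →
    g ξ ≤ ∫ x in unitCube N, g (ξ + fderiv ℝ u x)

/-- The quasiconvex envelope `Qg = sup{h quasiconvex : h ≤ g}`, pointwise. -/
noncomputable def qcEnvelope {N d : ℕ} (g : ((Fin N → ℝ) →L[ℝ] (Fin d → ℝ)) → ℝ) :
    ((Fin N → ℝ) →L[ℝ] (Fin d → ℝ)) → ℝ :=
  fun ξ => sSup {y : ℝ | ∃ h, MorreyQuasiconvex h ∧ (∀ z, h z ≤ g z) ∧ y = h ξ}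

/-!
For `1 ≤ m ≤ n` put `A = Qf^m(ξ)` and `a = A^{1/m}`. The convex map `s ↦ s^{n/m}` lies above its
tangent `s ↦ c s - K` at `s = A`, so for every quasiconvex `h ≤ f^m` the function `c h - K` is
quasiconvex (`c, K ≥ 0`) and lies below `f^n`. Taking the supremum over `h` gives
`a^n = c A - K ≤ Qf^n(ξ)`, i.e. `(Qf^m)^{1/m} ≤ (Qf^n)^{1/n}`. This avoids having to show that the
envelope itself is quasiconvex.
-/

variable {N d : ℕ}

local notation "𝕄" => (Fin N → ℝ) →L[ℝ] (Fin d → ℝ)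

lemma volume_unitCube (N : ℕ) : volume (unitCube N) = 1 := by
  simp [unitCube, volume_pi_pi, Real.volume_Ioo]

lemma setIntegral_unitCube_const (N : ℕ) (k : ℝ) : ∫ _ in unitCube N, k = k := by
  simp [measureReal_def, volume_unitCube]

namespace MorreyQuasiconvex

lemma const (k : ℝ) : MorreyQuasiconvex (fun _ : 𝕄 => k) := fun _ _ _ _ => by
  rw [setIntegral_unitCube_const]

lemma const_mul {h : 𝕄 → ℝ} (hh : MorreyQuasiconvex h) {c : ℝ} (hc : 0 ≤ c) :
    MorreyQuasiconvex fun z => c * h z := fun ξ u hu hu0 => by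
  rw [integral_const_mul]
  exact mul_le_mul_of_nonneg_left (hh ξ u hu hu0) hc

lemma sub_const {h : 𝕄 → ℝ} (hh : MorreyQuasiconvex h) {K : ℝ} (hK : 0 ≤ K) :
    MorreyQuasiconvex fun z => h z - K := fun ξ u hu hu0 => by
  have hξ := hh ξ u hu hu0
  have hKint : IntegrableOn (fun _ => K) (unitCube N) :=
    integrableOn_const (by simp [volume_unitCube])
  by_cases hint : IntegrableOn (fun x => h (ξ + fderiv ℝ u x)) (unitCube N)
  · rw [integral_sub hint hKint, setIntegral_unitCube_const]
    linarith
  · -- Both integrals take the junk value `0`, so `h ξ ≤ 0` and `K ≥ 0` are what is needed.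
    have hint' : ¬ IntegrableOn (fun x => h (ξ + fderiv ℝ u x) - K) (unitCube N) :=
      fun hI => hint ((hI.add hKint).congr (ae_of_all _ fun x => sub_add_cancel _ K))
    rw [integral_undef hint] at hξ
    rw [integral_undef hint']
    linarith

end MorreyQuasiconvex

lemma le_qcEnvelope {g h : 𝕄 → ℝ} (hh : MorreyQuasiconvex h) (hhg : ∀ z, h z ≤ g z) (ξ : 𝕄) :
    h ξ ≤ qcEnvelope g ξ :=
  le_csSup ⟨g ξ, by rintro _ ⟨h', -, hh'g, rfl⟩; exact hh'g ξ⟩ ⟨h, hh, hhg, rfl⟩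

lemma qcEnvelope_le_of_forall {g : 𝕄 → ℝ} (hg : ∀ z, 0 ≤ g z) {ξ : 𝕄} {b : ℝ}
    (hb : ∀ h, MorreyQuasiconvex h → (∀ z, h z ≤ g z) → h ξ ≤ b) : qcEnvelope g ξ ≤ b :=
  csSup_le ⟨0, fun _ => 0, MorreyQuasiconvex.const 0, hg, rfl⟩ <| by
    rintro _ ⟨h, hh, hhg, rfl⟩
    exact hb h hh hhg

lemma qcEnvelope_nonneg {g : 𝕄 → ℝ} (hg : ∀ z, 0 ≤ g z) (ξ : 𝕄) : 0 ≤ qcEnvelope g ξ :=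
  le_qcEnvelope (MorreyQuasiconvex.const 0) hg ξ

lemma qcEnvelope_le {g : 𝕄 → ℝ} (hg : ∀ z, 0 ≤ g z) (ξ : 𝕄) : qcEnvelope g ξ ≤ g ξ :=
  qcEnvelope_le_of_forall hg fun _ _ hhg => hhg ξ

lemma mul_qcEnvelope_sub_le {g g' : 𝕄 → ℝ} (hg : ∀ z, 0 ≤ g z) {c K : ℝ} (hc : 0 ≤ c)
    (hK : 0 ≤ K) (hgg' : ∀ z, c * g z - K ≤ g' z) (ξ : 𝕄) :
    c * qcEnvelope g ξ - K ≤ qcEnvelope g' ξ := by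
  rcases hc.eq_or_lt with rfl | hc
  · simpa using le_qcEnvelope (MorreyQuasiconvex.const (-K)) (by simpa using hgg') ξ
  · have hle : qcEnvelope g ξ ≤ (qcEnvelope g' ξ + K) / c := by
      refine qcEnvelope_le_of_forall hg fun h hh hhg => ?_
      have hbelow : ∀ z, c * h z - K ≤ g' z := fun z =>
        (sub_le_sub_right (mul_le_mul_of_nonneg_left (hhg z) hc.le) K).trans (hgg' z)
      have := le_qcEnvelope ((hh.const_mul hc.le).sub_const hK) hbelow ξ
      rw [le_div_iff₀ hc]
      linarith
    rw [le_div_iff₀ hc] at hle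
    linarith

/-- The tangent to the convex map `s ↦ s^{n/m}` at `s = a^m`, evaluated at `s = t^m`, lies below
`t^n`: weighted AM-GM with weights `m/n` and `(n-m)/n`. -/
lemma tangent_pow_le {m n : ℕ} (hm : 0 < m) (hmn : m ≤ n) {a t : ℝ} (ha : 0 ≤ a) (ht : 0 ≤ t) :
    n / m * a ^ (n - m) * t ^ m - (n - m) / m * a ^ n ≤ t ^ n := by
  have hmR : (0 : ℝ) < m := by exact_mod_cast hm
  have hnR : (0 : ℝ) < n := by exact_mod_cast hm.trans_le hmn
  have hmnR : (m : ℝ) ≤ n := by exact_mod_cast hmn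
  have amgm := Real.geom_mean_le_arith_mean2_weighted (w₁ := m / n) (w₂ := (n - m) / n)
    (p₁ := t ^ n) (p₂ := a ^ n) (by positivity) (div_nonneg (by linarith) hnR.le)
    (by positivity) (by positivity) (by field_simp; ring)
  have ht' : (t ^ n) ^ ((m : ℝ) / n) = t ^ m := by
    rw [← Real.rpow_natCast t n, ← Real.rpow_mul ht, mul_div_cancel₀ _ hnR.ne', Real.rpow_natCast]
  have ha' : (a ^ n) ^ (((n : ℝ) - m) / n) = a ^ (n - m) := by
    rw [← Real.rpow_natCast a n, ← Real.rpow_mul ha, mul_div_cancel₀ _ hnR.ne',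
      ← Nat.cast_sub hmn, Real.rpow_natCast]
  rw [ht', ha'] at amgm
  rw [sub_le_iff_le_add, ← sub_nonneg]
  have key : 0 ≤ (m / n * t ^ n + (n - m) / n * a ^ n - t ^ m * a ^ (n - m)) * (n / m) :=
    mul_nonneg (by linarith) (by positivity)
  convert key using 1
  field_simp

lemma qcEnvelope_pow_rpow_le {f : 𝕄 → ℝ} (hf : ∀ z, 0 ≤ f z) {m n : ℕ} (hm : 1 ≤ m)
    (hmn : m ≤ n) (ξ : 𝕄) :
    qcEnvelope (fun z => f z ^ m) ξ ^ (1 / (m : ℝ)) ≤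
      qcEnvelope (fun z => f z ^ n) ξ ^ (1 / (n : ℝ)) := by
  have hA := qcEnvelope_nonneg (fun z => pow_nonneg (hf z) m) ξ
  set a := qcEnvelope (fun z => f z ^ m) ξ ^ (1 / (m : ℝ)) with ha_def
  have ha : 0 ≤ a := Real.rpow_nonneg hA _
  have ham : a ^ m = qcEnvelope (fun z => f z ^ m) ξ := by
    rw [ha_def, one_div, Real.rpow_inv_natCast_pow hA (by omega)]
  have hmnR : (m : ℝ) ≤ n := by exact_mod_cast hmn
  have hmR : (0 : ℝ) < m := by exact_mod_cast hm
  have hpow : a ^ (n - m) * a ^ m = a ^ n := by rw [← pow_add, Nat.sub_add_cancel hmn]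
  have htangent : n / m * a ^ (n - m) * a ^ m - (n - m) / m * a ^ n = a ^ n := by
    rw [mul_assoc, hpow]
    field_simp
    ring
  have han : a ^ n ≤ qcEnvelope (fun z => f z ^ n) ξ := by
    rw [← htangent, ham]
    exact mul_qcEnvelope_sub_le (fun z => pow_nonneg (hf z) m) (by positivity)
      (mul_nonneg (div_nonneg (by linarith) hmR.le) (pow_nonneg ha n))
      (fun z => tangent_pow_le hm hmn ha (hf z)) ξ
  calc a = (a ^ n) ^ (1 / (n : ℝ)) := by
        rw [one_div, Real.pow_rpow_inv_natCast ha (by omega)]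
    _ ≤ _ := Real.rpow_le_rpow (pow_nonneg ha n) han (by positivity)

lemma qcEnvelope_pow_rpow_le_self {f : 𝕄 → ℝ} (hf : ∀ z, 0 ≤ f z) {n : ℕ} (hn : n ≠ 0)
    (ξ : 𝕄) : qcEnvelope (fun z => f z ^ n) ξ ^ (1 / (n : ℝ)) ≤ f ξ :=
  calc qcEnvelope (fun z => f z ^ n) ξ ^ (1 / (n : ℝ)) ≤ (f ξ ^ n) ^ (1 / (n : ℝ)) :=
        Real.rpow_le_rpow (qcEnvelope_nonneg (fun z => pow_nonneg (hf z) n) ξ)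
          (qcEnvelope_le (fun z => pow_nonneg (hf z) n) ξ) (by positivity)
    _ = f ξ := by rw [one_div, Real.pow_rpow_inv_natCast (hf ξ) hn]

theorem qcEnvelope_pow_monotone_general {N d : ℕ}
    (f : ((Fin N → ℝ) →L[ℝ] (Fin d → ℝ)) → ℝ)
    (hnonneg : ∀ ξ, 0 ≤ f ξ) :
    (∀ m n : ℕ, 1 ≤ m → m ≤ n → ∀ ξ,
      (qcEnvelope (fun z => f z ^ m) ξ) ^ (1 / (m : ℝ))
        ≤ (qcEnvelope (fun z => f z ^ n) ξ) ^ (1 / (n : ℝ))) ∧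
    (∀ ξ, sSup {y : ℝ | ∃ n : ℕ, 1 ≤ n ∧
        y = (qcEnvelope (fun z => f z ^ n) ξ) ^ (1 / (n : ℝ))} ≤ f ξ) := by
  refine ⟨fun m n hm hmn ξ => qcEnvelope_pow_rpow_le hnonneg hm hmn ξ, fun ξ => ?_⟩
  refine Real.sSup_le ?_ (hnonneg ξ)
  rintro _ ⟨n, hn, rfl⟩
  exact qcEnvelope_pow_rpow_le_self hnonneg (by omega) ξ

/-- **Monotonicity of power envelopes.** For Borel `f ≥ 0`, the sequence
`n ↦ (Qf^n)^{1/n}(ξ)` is nondecreasing in `n ≥ 1` at every `ξ`, so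
`Q_∞f(ξ) := sup_{n≥1} (Qf^n)^{1/n}(ξ)` is well defined and `Q_∞f ≤ f`. -/
theorem qcEnvelope_pow_monotone {N d : ℕ}
    (f : ((Fin N → ℝ) →L[ℝ] (Fin d → ℝ)) → ℝ)
    (hmeas : Measurable f) (hnonneg : ∀ ξ, 0 ≤ f ξ) :
    (∀ m n : ℕ, 1 ≤ m → m ≤ n → ∀ ξ,
      (qcEnvelope (fun z => f z ^ m) ξ) ^ (1 / (m : ℝ))
        ≤ (qcEnvelope (fun z => f z ^ n) ξ) ^ (1 / (n : ℝ))) ∧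
    (∀ ξ, sSup {y : ℝ | ∃ n : ℕ, 1 ≤ n ∧
        y = (qcEnvelope (fun z => f z ^ n) ξ) ^ (1 / (n : ℝ))} ≤ f ξ) :=
  qcEnvelope_pow_monotone_general f hnonneg
end

section
/- Ratio control for variable exponent powers: Let 0 < |Ω| < ∞, p_n bounded variable exponents with p_n⁻ → ∞ and p_n⁺/p_n⁻ ≤ β for all n, and let v: Ω → [0,∞) be measurable with ess sup v = 1. Then lim_{n→∞} (∫_Ω v(x)^{p_n(x)} dx)^{1/p_n⁺} = 1 and lim_{n→∞} (∫_Ω v(x)^{p_n(x)} dx)^{1/p_n⁻} = 1. -/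
/-!
Write `I_n = ∫_Ω v^{p_n}`. Since `v ≤ 1` a.e., `I_n ≤ |Ω|`, and `|Ω|^{1/c_n} → 1` for any
`c_n → ∞`. Conversely, for `0 < t < 1` the set `{v > t}` has positive measure `m_t` because
`ess sup v = 1`, and `I_n ≥ t^{p_n⁺} m_t`. When `p_n⁺ ≤ γ c_n` this gives
`I_n^{1/c_n} ≥ t^γ m_t^{1/c_n} → t^γ`, which is arbitrarily close to `1`. Both limits are this
argument with `c_n = p_n⁺, γ = 1` and with `c_n = p_n⁻, γ = β`.
-/

open MeasureTheory Set Filter Topology ENNReal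

lemma ENNReal.tendsto_rpow_one_div_of_tendsto_atTop {ι : Type*} {l : Filter ι} {x : ℝ≥0∞}
    (hx0 : x ≠ 0) (hx : x ≠ ⊤) {c : ι → ℝ} (hc : Tendsto c l atTop) :
    Tendsto (fun i => x ^ (1 / c i)) l (𝓝 1) := by
  have hr : 0 < x.toReal := ENNReal.toReal_pos hx0 hx
  have hexp : Tendsto (fun i => 1 / c i) l (𝓝 0) :=
    hc.inv_tendsto_atTop.congr fun i => (one_div (c i)).symm
  have hreal := ENNReal.tendsto_ofReal ((Real.continuousAt_const_rpow hr.ne').tendsto.comp hexp)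
  rw [Real.rpow_zero, ENNReal.ofReal_one] at hreal
  refine hreal.congr fun i => ?_
  rw [Function.comp_apply, ← ENNReal.ofReal_rpow_of_pos hr, ENNReal.ofReal_toReal hx]

lemma ENNReal.tendsto_one_of_le_rpow_one_div {ι : Type*} {l : Filter ι} {c : ι → ℝ}
    (hc : Tendsto c l atTop) {T : ι → ℝ≥0∞} {M : ℝ≥0∞} (hM0 : M ≠ 0) (hM : M ≠ ⊤)
    (hle : ∀ᶠ i in l, T i ≤ M ^ (1 / c i))
    (hge : ∀ s : ℝ≥0∞, 0 < s → s < 1 →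
      ∃ m : ℝ≥0∞, m ≠ 0 ∧ m ≠ ⊤ ∧ ∀ᶠ i in l, s * m ^ (1 / c i) ≤ T i) :
    Tendsto T l (𝓝 1) := by
  refine tendsto_order.2 ⟨fun a ha => ?_, fun a ha => ?_⟩
  · obtain ⟨s, has, hs1⟩ := exists_between ha
    obtain ⟨m, hm0, hm, hsm⟩ := hge s (pos_of_gt has) hs1
    have hlim : Tendsto (fun i => s * m ^ (1 / c i)) l (𝓝 s) := by
      simpa using ENNReal.Tendsto.const_mul
        (ENNReal.tendsto_rpow_one_div_of_tendsto_atTop hm0 hm hc) (Or.inl one_ne_zero)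
    filter_upwards [hlim.eventually (lt_mem_nhds has), hsm] with i hai hsi
    exact hai.trans_le hsi
  · filter_upwards [(ENNReal.tendsto_rpow_one_div_of_tendsto_atTop hM0 hM hc).eventually
      (gt_mem_nhds ha), hle] with i hMa hTM
    exact hTM.trans_lt hMa

section

variable {α : Type*} [MeasurableSpace α] {μ : Measure α} {f : α → ℝ}

/-- In `ℝ` the essential supremum of a function that is not essentially bounded above is `0`. -/
lemma ae_le_essSup_of_essSup_ne_zero (hf : essSup f μ ≠ 0) : ∀ᵐ x ∂μ, f x ≤ essSup f μ := by
  refine ae_le_essSup (not_not.1 fun hbdd => hf ?_)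
  exact Real.limsup_of_not_isBoundedUnder hbdd

lemma measure_lt_ne_zero_of_lt_essSup [NeZero μ] (hf0 : ∀ᵐ x ∂μ, 0 ≤ f x) {t : ℝ}
    (ht : t < essSup f μ) : μ {x | t < f x} ≠ 0 := by
  intro h
  have hft : ∀ᵐ x ∂μ, f x ≤ t := by simpa [ae_iff] using h
  exact ht.not_ge (essSup_le_of_ae_le t hft (IsBoundedUnder.isCoboundedUnder_le ⟨0, hf0⟩))

lemma lintegral_ofReal_rpow_le_measure_univ {q : α → ℝ} (hf0 : ∀ᵐ x ∂μ, 0 ≤ f x)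
    (hf1 : ∀ᵐ x ∂μ, f x ≤ 1) (hq : ∀ᵐ x ∂μ, 0 ≤ q x) :
    ∫⁻ x, ENNReal.ofReal (f x ^ q x) ∂μ ≤ μ univ :=
  calc ∫⁻ x, ENNReal.ofReal (f x ^ q x) ∂μ ≤ ∫⁻ _, 1 ∂μ := lintegral_mono_ae <| by
        filter_upwards [hf0, hf1, hq] with x hx0 hx1 hqx
        exact ENNReal.ofReal_le_one.2 (Real.rpow_le_one hx0 hx1 hqx)
    _ = μ univ := lintegral_one

lemma ofReal_rpow_mul_measure_lt_le_lintegral (hf : Measurable f) {q : α → ℝ} {a t : ℝ}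
    (ht0 : 0 < t) (ht1 : t ≤ 1) (hq : ∀ᵐ x ∂μ, 0 ≤ q x) (hqa : ∀ᵐ x ∂μ, q x ≤ a) :
    ENNReal.ofReal t ^ a * μ {x | t < f x} ≤ ∫⁻ x, ENNReal.ofReal (f x ^ q x) ∂μ := by
  have hA : MeasurableSet {x | t < f x} := measurableSet_lt measurable_const hf
  calc ENNReal.ofReal t ^ a * μ {x | t < f x}
      = ∫⁻ _ in {x | t < f x}, ENNReal.ofReal (t ^ a) ∂μ := by
        rw [setLIntegral_const, ENNReal.ofReal_rpow_of_pos ht0]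
    _ ≤ ∫⁻ x in {x | t < f x}, ENNReal.ofReal (f x ^ q x) ∂μ := lintegral_mono_ae <| by
        filter_upwards [ae_restrict_of_ae hq, ae_restrict_of_ae hqa, ae_restrict_mem hA]
          with x hqx hxa (hx : t < f x)
        exact ENNReal.ofReal_le_ofReal ((Real.rpow_le_rpow_of_exponent_ge ht0 ht1 hxa).trans
          (Real.rpow_le_rpow ht0.le hx.le hqx))
    _ ≤ ∫⁻ x, ENNReal.ofReal (f x ^ q x) ∂μ := setLIntegral_le_lintegral _ _

lemma tendsto_lintegral_ofReal_rpow_rpow_one_div [IsFiniteMeasure μ] [NeZero μ]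
    (hf : Measurable f) (hf0 : ∀ᵐ x ∂μ, 0 ≤ f x) (hf1 : essSup f μ = 1)
    {ι : Type*} {l : Filter ι} {p : ι → α → ℝ} {c : ι → ℝ} {γ : ℝ} (hγ : 0 < γ)
    (hc : Tendsto c l atTop) (hp0 : ∀ i, ∀ᵐ x ∂μ, 0 ≤ p i x)
    (hpc : ∀ᶠ i in l, ∀ᵐ x ∂μ, p i x ≤ γ * c i) :
    Tendsto (fun i => (∫⁻ x, ENNReal.ofReal (f x ^ p i x) ∂μ) ^ (1 / c i)) l (𝓝 1) := by
  have hfle : ∀ᵐ x ∂μ, f x ≤ 1 := hf1 ▸ ae_le_essSup_of_essSup_ne_zero (hf1 ▸ one_ne_zero)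
  refine ENNReal.tendsto_one_of_le_rpow_one_div hc (NeZero.ne (μ univ)) (measure_ne_top μ univ)
    ?_ fun s hs0 hs1 => ?_
  · filter_upwards [hc.eventually_ge_atTop 0] with i hci
    exact ENNReal.rpow_le_rpow (lintegral_ofReal_rpow_le_measure_univ hf0 hfle (hp0 i))
      (by positivity)
  set t := (s ^ γ⁻¹).toReal
  have hst : ENNReal.ofReal t = s ^ γ⁻¹ :=
    ENNReal.ofReal_toReal (ENNReal.rpow_ne_top_of_nonneg (inv_nonneg.2 hγ.le) hs1.ne_top)
  have ht0 : 0 < t := ENNReal.ofReal_pos.1 (hst ▸ ENNReal.rpow_pos hs0 hs1.ne_top)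
  have ht1 : t < 1 := ENNReal.ofReal_lt_one.1 (hst ▸ ENNReal.rpow_lt_one hs1 (inv_pos.2 hγ))
  refine ⟨μ {x | t < f x}, measure_lt_ne_zero_of_lt_essSup hf0 (hf1 ▸ ht1),
    measure_ne_top _ _, ?_⟩
  filter_upwards [hc.eventually_gt_atTop 0, hpc] with i hci hpi
  have hci' : 0 ≤ 1 / c i := by positivity
  have hγc : γ * c i * (1 / c i) = γ := by field_simp
  calc s * μ {x | t < f x} ^ (1 / c i)
      = (ENNReal.ofReal t ^ (γ * c i) * μ {x | t < f x}) ^ (1 / c i) := by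
        rw [ENNReal.mul_rpow_of_nonneg _ _ hci', ← ENNReal.rpow_mul,
          hγc, hst, ENNReal.rpow_inv_rpow hγ.ne']
    _ ≤ (∫⁻ x, ENNReal.ofReal (f x ^ p i x) ∂μ) ^ (1 / c i) :=
        ENNReal.rpow_le_rpow (ofReal_rpow_mul_measure_lt_le_lintegral hf ht0 ht1.le (hp0 i) hpi)
          hci'

end

theorem ve_power_ratio_limits_general {N : ℕ} (Ω : Set (Fin N → ℝ))
    (hΩ₀ : 0 < volume Ω) (hΩ : volume Ω < ⊤)
    (p : ℕ → (Fin N → ℝ) → ℝ)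
    (hp1 : ∀ n, ∀ᵐ x ∂(volume.restrict Ω), 1 ≤ p n x)
    (hpb : ∀ n, ∃ B : ℝ, ∀ᵐ x ∂(volume.restrict Ω), p n x ≤ B)
    (hpinf : Tendsto (fun n => essInf (p n) (volume.restrict Ω)) atTop atTop)
    (β : ℝ) (hβ : 0 < β)
    (hratio : ∀ n, essSup (p n) (volume.restrict Ω)
      ≤ β * essInf (p n) (volume.restrict Ω))
    (v : (Fin N → ℝ) → ℝ) (hv : Measurable v) (hv0 : ∀ x, 0 ≤ v x)
    (hvsup : essSup v (volume.restrict Ω) = 1) :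
    Tendsto (fun n => (∫⁻ x in Ω, ENNReal.ofReal (v x ^ p n x))
        ^ (1 / essSup (p n) (volume.restrict Ω))) atTop (nhds 1) ∧
    Tendsto (fun n => (∫⁻ x in Ω, ENNReal.ofReal (v x ^ p n x))
        ^ (1 / essInf (p n) (volume.restrict Ω))) atTop (nhds 1) := by
  set μ := volume.restrict Ω
  have : IsFiniteMeasure μ := isFiniteMeasure_restrict.2 hΩ.ne
  have : NeZero μ := ⟨by simpa [μ] using hΩ₀.ne'⟩
  have hp0 : ∀ n, ∀ᵐ x ∂μ, 0 ≤ p n x := fun n => (hp1 n).mono fun _ hx => zero_le_one.trans hx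
  have hle_sup : ∀ n, ∀ᵐ x ∂μ, p n x ≤ essSup (p n) μ := fun n =>
    ae_le_essSup (let ⟨B, hB⟩ := hpb n; ⟨B, hB⟩)
  have hinf_le_sup : ∀ n, essInf (p n) μ ≤ essSup (p n) μ := fun n =>
    let ⟨_, hinf, hsup⟩ := ((ae_essInf_le ⟨1, hp1 n⟩).and (hle_sup n)).exists
    hinf.trans hsup
  have hv0' : ∀ᵐ x ∂μ, 0 ≤ v x := ae_of_all _ hv0
  exact ⟨tendsto_lintegral_ofReal_rpow_rpow_one_div hv hv0' hvsup one_pos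
      (tendsto_atTop_mono hinf_le_sup hpinf) hp0
      (Eventually.of_forall fun n => by simpa only [one_mul] using hle_sup n),
    tendsto_lintegral_ofReal_rpow_rpow_one_div hv hv0' hvsup hβ hpinf hp0
      (Eventually.of_forall fun n => (hle_sup n).mono fun _ hx => hx.trans (hratio n))⟩

/-- **Ratio control for variable exponent powers.** Let `0 < |Ω| < ∞`,
`p_n` bounded variable exponents with `p_n⁻ = ess inf p_n → ∞` and `p_n⁺ ≤ β p_n⁻`, and
`v` measurable with `0 ≤ v` and `ess sup v = 1`. Then
`(∫_Ω v^{p_n(x)})^{1/p_n⁺} → 1` and `(∫_Ω v^{p_n(x)})^{1/p_n⁻} → 1`. -/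
theorem ve_power_ratio_limits {N : ℕ} (Ω : Set (Fin N → ℝ))
    (hΩ₀ : 0 < volume Ω) (hΩ : volume Ω < ⊤)
    (p : ℕ → (Fin N → ℝ) → ℝ) (hpm : ∀ n, Measurable (p n))
    (hp1 : ∀ n, ∀ᵐ x ∂(volume.restrict Ω), 1 ≤ p n x)
    (hpb : ∀ n, ∃ B : ℝ, ∀ᵐ x ∂(volume.restrict Ω), p n x ≤ B)
    (hpinf : Tendsto (fun n => essInf (p n) (volume.restrict Ω)) atTop atTop)
    (β : ℝ) (hβ : 0 < β)
    (hratio : ∀ n, essSup (p n) (volume.restrict Ω)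
      ≤ β * essInf (p n) (volume.restrict Ω))
    (v : (Fin N → ℝ) → ℝ) (hv : Measurable v) (hv0 : ∀ x, 0 ≤ v x)
    (hvsup : essSup v (volume.restrict Ω) = 1) :
    Tendsto (fun n => (∫⁻ x in Ω, ENNReal.ofReal (v x ^ p n x))
        ^ (1 / essSup (p n) (volume.restrict Ω))) atTop (nhds 1) ∧
    Tendsto (fun n => (∫⁻ x in Ω, ENNReal.ofReal (v x ^ p n x))
        ^ (1 / essInf (p n) (volume.restrict Ω))) atTop (nhds 1) :=
  ve_power_ratio_limits_general Ω hΩ₀ hΩ p hp1 hpb hpinf β hβ hratio v hv hv0 hvsup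
end
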